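/- arXiv:math/0409344 — 5 statements merged into one kernel-verified Lean document; each statement's English description precedes it below -/
import Mathlib

section
/- Let d ≥ 2 be an integer. For z = (z₁, …, z_d) ∈ ℝ^d with z_d > 0 and r_{d−1} := (z₁² + ⋯ + z_{d−1}²)^{1/2} > 0, setting r_d := (z₁² + ⋯ + z_d²)^{1/2}, the sum of the second partial derivatives satisfies (∂²/∂z₁² + ⋯ + ∂²/∂z_d²) arsinh(r_{d−1}/z_d) = ((d−2)z_d² + r_{d−1}²) / (z_d² · r_{d−1} · r_d). -/
open Real Finset

/-!
Write `h = z_ℓ` and `S = ∑_{j ≠ ℓ} z_j²`. On the `ℓ`-th coordinate line through `z` the function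
`arsinh(√S / h)` becomes `t ↦ arsinh(√S / t)`, on the `i`-th one (`i ≠ ℓ`) it becomes
`t ↦ arsinh(√(c + t²) / h)` with `c = S - z_i²`; both have explicit second derivatives. In the
`i ≠ ℓ` terms only `z_i²` varies with `i`, so their sum collapses via `∑_{i ≠ ℓ} z_i² = S`, and a
rational identity in `√S` and `√(h² + S)` finishes.
-/
lemma sqrt_one_add_div_sq (a : ℝ) {h : ℝ} (hh : 0 < h) :
    √(1 + (a / h) ^ 2) = √(h ^ 2 + a ^ 2) / h := by
  rw [eq_div_iff hh.ne', ← sqrt_sq hh.le, ← sqrt_mul (by positivity), sqrt_sq hh.le]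
  congr 1
  field_simp

lemma hasDerivAt_sqrt_add_sq {k t : ℝ} (hkt : 0 < k + t ^ 2) :
    HasDerivAt (fun s => √(k + s ^ 2)) (t / √(k + t ^ 2)) t := by
  convert ((hasDerivAt_pow 2 t).const_add k).sqrt hkt.ne' using 1
  field_simp
  ring

lemma hasDerivAt_arsinh_const_div (r : ℝ) {t : ℝ} (ht : 0 < t) :
    HasDerivAt (fun s => arsinh (r / s)) (-r / (t * √(r ^ 2 + t ^ 2))) t := by
  refine (((hasDerivAt_const t r).fun_div (hasDerivAt_id' t) ht.ne').arsinh).congr_deriv ?_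
  rw [sqrt_one_add_div_sq r ht, add_comm (t ^ 2), smul_eq_mul]
  have : 0 < √(r ^ 2 + t ^ 2) := sqrt_pos.2 (by positivity)
  field_simp
  ring

lemma deriv_deriv_arsinh_const_div (r : ℝ) {t : ℝ} (ht : 0 < t) :
    deriv (deriv fun s => arsinh (r / s)) t
      = r * (r ^ 2 + 2 * t ^ 2) / (t ^ 2 * √(r ^ 2 + t ^ 2) ^ 3) := by
  have hderiv : deriv (fun s => arsinh (r / s)) =ᶠ[nhds t]
      fun s => -r / (s * √(r ^ 2 + s ^ 2)) := by
    filter_upwards [Ioi_mem_nhds ht] with s hs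
    exact (hasDerivAt_arsinh_const_div r hs).deriv
  have hR : 0 < √(r ^ 2 + t ^ 2) := sqrt_pos.2 (by positivity)
  have hR2 : √(r ^ 2 + t ^ 2) ^ 2 = r ^ 2 + t ^ 2 := sq_sqrt (by positivity)
  rw [hderiv.deriv_eq]
  refine ((hasDerivAt_const t (-r)).fun_div ((hasDerivAt_id' t).fun_mul
    (hasDerivAt_sqrt_add_sq (by positivity))) (mul_pos ht hR).ne').deriv.trans ?_
  field_simp
  linear_combination r * hR2

lemma hasDerivAt_arsinh_sqrt_add_sq_div {c h t : ℝ} (hh : 0 < h) (hct : 0 < c + t ^ 2) :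
    HasDerivAt (fun s => arsinh (√(c + s ^ 2) / h))
      (t / (√(c + t ^ 2) * √(h ^ 2 + c + t ^ 2))) t := by
  refine ((hasDerivAt_sqrt_add_sq hct).div_const h).arsinh.congr_deriv ?_
  rw [sqrt_one_add_div_sq _ hh, sq_sqrt hct.le, ← add_assoc, smul_eq_mul]
  have : 0 < √(c + t ^ 2) := sqrt_pos.2 hct
  have : 0 < √(h ^ 2 + c + t ^ 2) := sqrt_pos.2 (by rw [add_assoc]; positivity)
  field_simp

lemma deriv_deriv_arsinh_sqrt_add_sq_div {c h t : ℝ} (hh : 0 < h) (hct : 0 < c + t ^ 2) :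
    deriv (deriv fun s => arsinh (√(c + s ^ 2) / h)) t
      = ((c + t ^ 2) * (h ^ 2 + c + t ^ 2) - t ^ 2 * (h ^ 2 + 2 * (c + t ^ 2)))
        / (√(c + t ^ 2) ^ 3 * √(h ^ 2 + c + t ^ 2) ^ 3) := by
  have hderiv : deriv (fun s => arsinh (√(c + s ^ 2) / h)) =ᶠ[nhds t]
      fun s => s / (√(c + s ^ 2) * √(h ^ 2 + c + s ^ 2)) := by
    have hpos : ∀ᶠ s in nhds t, 0 < c + s ^ 2 :=
      ((by fun_prop : Continuous fun s : ℝ => c + s ^ 2).tendsto t).eventually (lt_mem_nhds hct)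
    filter_upwards [hpos] with s hs
    exact (hasDerivAt_arsinh_sqrt_add_sq_div hh hs).deriv
  have hhct : 0 < h ^ 2 + c + t ^ 2 := by rw [add_assoc]; positivity
  have hρ : 0 < √(c + t ^ 2) := sqrt_pos.2 hct
  have hR : 0 < √(h ^ 2 + c + t ^ 2) := sqrt_pos.2 hhct
  have hρ2 : √(c + t ^ 2) ^ 2 = c + t ^ 2 := sq_sqrt hct.le
  have hR2 : √(h ^ 2 + c + t ^ 2) ^ 2 = h ^ 2 + c + t ^ 2 := sq_sqrt hhct.le
  rw [hderiv.deriv_eq]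
  refine ((hasDerivAt_id' t).fun_div ((hasDerivAt_sqrt_add_sq hct).fun_mul
    (hasDerivAt_sqrt_add_sq hhct)) (mul_pos hρ hR).ne').deriv.trans ?_
  field_simp
  linear_combination (√(h ^ 2 + c + t ^ 2) ^ 2 - t ^ 2) * hρ2 + c * hR2

section

variable {ι : Type*} [Fintype ι] [DecidableEq ι]

noncomputable def coordLaplacian (f : (ι → ℝ) → ℝ) (z : ι → ℝ) : ℝ :=
  ∑ i, deriv (deriv fun t => f (Function.update z i t)) (z i)

/-- Hyperbolic distance from `z` to the `ℓ`-th coordinate axis in the half-space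
`{z | 0 < z ℓ}`. -/
noncomputable def axisDist (ℓ : ι) (z : ι → ℝ) : ℝ :=
  arsinh (√(∑ j ∈ univ.erase ℓ, z j ^ 2) / z ℓ)

lemma axisDist_update_self (ℓ : ι) (z : ι → ℝ) (t : ℝ) :
    axisDist ℓ (Function.update z ℓ t) = arsinh (√(∑ j ∈ univ.erase ℓ, z j ^ 2) / t) := by
  rw [axisDist, Function.update_self]
  congr 3
  exact sum_congr rfl fun j hj => by rw [Function.update_of_ne (ne_of_mem_erase hj)]

lemma axisDist_update_of_ne {ℓ i : ι} (hi : i ≠ ℓ) (z : ι → ℝ) (t : ℝ) :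
    axisDist ℓ (Function.update z i t)
      = arsinh (√(∑ j ∈ (univ.erase ℓ).erase i, z j ^ 2 + t ^ 2) / z ℓ) := by
  have hsq : (fun j => Function.update z i t j ^ 2)
      = Function.update (fun j => z j ^ 2) i (t ^ 2) :=
    funext (Function.apply_update (fun _ x => x ^ 2) z i t)
  rw [axisDist, Function.update_of_ne hi.symm, hsq,
    sum_update_of_mem (mem_erase.2 ⟨hi, mem_univ i⟩), sdiff_singleton_eq_erase, add_comm]

lemma deriv_deriv_axisDist_update_self {ℓ : ι} {z : ι → ℝ} (hz : 0 < z ℓ) :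
    deriv (deriv fun t => axisDist ℓ (Function.update z ℓ t)) (z ℓ)
      = √(∑ j ∈ univ.erase ℓ, z j ^ 2) * (∑ j ∈ univ.erase ℓ, z j ^ 2 + 2 * z ℓ ^ 2)
        / (z ℓ ^ 2 * √(z ℓ ^ 2 + ∑ j ∈ univ.erase ℓ, z j ^ 2) ^ 3) := by
  simp only [axisDist_update_self]
  rw [deriv_deriv_arsinh_const_div _ hz, sq_sqrt (sum_nonneg fun j _ => sq_nonneg (z j)),
    add_comm (z ℓ ^ 2)]

lemma deriv_deriv_axisDist_update_of_ne {ℓ i : ι} (hi : i ≠ ℓ) {z : ι → ℝ} (hz : 0 < z ℓ)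
    (hS : 0 < ∑ j ∈ univ.erase ℓ, z j ^ 2) :
    deriv (deriv fun t => axisDist ℓ (Function.update z i t)) (z i)
      = ((∑ j ∈ univ.erase ℓ, z j ^ 2) * (z ℓ ^ 2 + ∑ j ∈ univ.erase ℓ, z j ^ 2)
          - z i ^ 2 * (z ℓ ^ 2 + 2 * ∑ j ∈ univ.erase ℓ, z j ^ 2))
        / (√(∑ j ∈ univ.erase ℓ, z j ^ 2) ^ 3
          * √(z ℓ ^ 2 + ∑ j ∈ univ.erase ℓ, z j ^ 2) ^ 3) := by
  have hsplit := sum_erase_add _ (fun j => z j ^ 2) (mem_erase.2 ⟨hi, mem_univ i⟩)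
  simp only [axisDist_update_of_ne hi]
  rw [deriv_deriv_arsinh_sqrt_add_sq_div hz (hsplit ▸ hS), add_assoc, hsplit]

lemma laplacian_axisDist_identity {n S h ρ R : ℝ} (hρ : 0 < ρ) (hR : 0 < R) (hh : 0 < h)
    (hρ2 : ρ ^ 2 = S) (hR2 : R ^ 2 = h ^ 2 + S) :
    ρ * (S + 2 * h ^ 2) / (h ^ 2 * R ^ 3)
        + ((n - 1) * (S * (h ^ 2 + S)) - S * (h ^ 2 + 2 * S)) / (ρ ^ 3 * R ^ 3)
      = ((n - 2) * h ^ 2 + S) / (h ^ 2 * ρ * R) := by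
  subst hρ2
  rw [div_add_div _ _ (by positivity) (by positivity),
    div_eq_div_iff (by positivity) (by positivity)]
  linear_combination (-(((n - 2) * h ^ 2 + ρ ^ 2) * h ^ 2 * ρ ^ 3 * R ^ 4)) * hR2

theorem coordLaplacian_axisDist {ℓ : ι} {z : ι → ℝ} (hz : 0 < z ℓ)
    (hS : 0 < ∑ j ∈ univ.erase ℓ, z j ^ 2) :
    coordLaplacian (axisDist ℓ) z
      = (((Fintype.card ι : ℝ) - 2) * z ℓ ^ 2 + ∑ j ∈ univ.erase ℓ, z j ^ 2)
        / (z ℓ ^ 2 * √(∑ j ∈ univ.erase ℓ, z j ^ 2) * √(∑ j, z j ^ 2)) := by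
  set S := ∑ j ∈ univ.erase ℓ, z j ^ 2
  have hcard : ((univ.erase ℓ).card : ℝ) = Fintype.card ι - 1 := by
    rw [card_erase_of_mem (mem_univ ℓ), card_univ, Nat.cast_sub (Fintype.card_pos_iff.2 ⟨ℓ⟩),
      Nat.cast_one]
  have hsum : ∑ i ∈ univ.erase ℓ, (S * (z ℓ ^ 2 + S) - z i ^ 2 * (z ℓ ^ 2 + 2 * S))
      = (Fintype.card ι - 1) * (S * (z ℓ ^ 2 + S)) - S * (z ℓ ^ 2 + 2 * S) := by
    rw [sum_sub_distrib, sum_const, nsmul_eq_mul, hcard, ← sum_mul]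
  rw [coordLaplacian, ← add_sum_erase _ _ (mem_univ ℓ), deriv_deriv_axisDist_update_self hz,
    sum_congr rfl fun i hi => deriv_deriv_axisDist_update_of_ne (ne_of_mem_erase hi) hz hS,
    ← sum_div, hsum, ← add_sum_erase _ (fun j => z j ^ 2) (mem_univ ℓ)]
  exact laplacian_axisDist_identity (sqrt_pos.2 hS) (sqrt_pos.2 (by positivity)) hz
    (sq_sqrt hS.le) (sq_sqrt (by positivity))

end

/-- In the half-space model coordinates, the Euclidean Laplacian of
`g(z) = arsinh(r_{d-1}/z_d)` equals `((d-2)z_d² + r_{d-1}²)/(z_d² · r_{d-1} · r_d)`. -/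
theorem laplacian_arsinh_halfspace (d : ℕ) (hd : 2 ≤ d) (z : Fin d → ℝ)
    (hz : 0 < z ⟨d - 1, by omega⟩)
    (hr : 0 < Real.sqrt (∑ i ∈ Finset.univ.filter (fun i : Fin d => (i : ℕ) < d - 1), z i ^ 2)) :
    (∑ i : Fin d,
        deriv (deriv (fun t : ℝ =>
          Real.arsinh
            (Real.sqrt (∑ j ∈ Finset.univ.filter (fun j : Fin d => (j : ℕ) < d - 1),
                (Function.update z i t) j ^ 2) /
              (Function.update z i t) ⟨d - 1, by omega⟩))) (z i))
      = (((d : ℝ) - 2) * (z ⟨d - 1, by omega⟩) ^ 2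
            + (Real.sqrt (∑ i ∈ Finset.univ.filter (fun i : Fin d => (i : ℕ) < d - 1),
                z i ^ 2)) ^ 2) /
          ((z ⟨d - 1, by omega⟩) ^ 2
            * Real.sqrt (∑ i ∈ Finset.univ.filter (fun i : Fin d => (i : ℕ) < d - 1), z i ^ 2)
            * Real.sqrt (∑ i : Fin d, z i ^ 2)) := by
  have hfilter :
      univ.filter (fun i : Fin d => (i : ℕ) < d - 1) = univ.erase ⟨d - 1, by omega⟩ := by
    ext i
    simp only [mem_filter, mem_univ, true_and, mem_erase, ne_eq, Fin.ext_iff, and_true]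
    have := i.isLt
    omega
  rw [hfilter] at hr ⊢
  have hS := sqrt_pos.1 hr
  have hlap := coordLaplacian_axisDist hz hS
  rw [Fintype.card_fin] at hlap
  rw [sq_sqrt hS.le]
  exact hlap
end

section
/- Let d ≥ 2 be an integer. For all real r > 0 and h > 0, one has arsinh(r/h) · ((d−2)h² + r²) / (r·√(r² + h²)) ≤ (d−2) + arsinh(r/h). -/
open Real

lemma arsinh_le_self' {x : ℝ} (hx : 0 ≤ x) : Real.arsinh x ≤ x := by
  calc Real.arsinh x ≤ Real.arsinh (Real.sinh x) :=
        Real.arsinh_le_arsinh.2 (Real.self_le_sinh_iff.2 hx)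
    _ = x := Real.arsinh_sinh x

/-- For `d ≥ 2`, `r > 0`, `h > 0`:
`arsinh(r/h) · ((d−2)h² + r²)/(r·√(r²+h²)) ≤ (d−2) + arsinh(r/h)`. -/
theorem arsinh_laplacian_bound (d : ℕ) (hd : 2 ≤ d) (r h : ℝ) (hr : 0 < r) (hh : 0 < h) :
    Real.arsinh (r / h) * (((d : ℝ) - 2) * h ^ 2 + r ^ 2) / (r * Real.sqrt (r ^ 2 + h ^ 2))
      ≤ ((d : ℝ) - 2) + Real.arsinh (r / h) := by
  set s := Real.sqrt (r ^ 2 + h ^ 2) with hs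
  have hs0 : 0 < s := Real.sqrt_pos.2 (by positivity)
  have hrs : r ≤ s := by
    rw [hs]
    nlinarith [Real.sq_sqrt (show (0:ℝ) ≤ r ^ 2 + h ^ 2 by positivity), Real.sqrt_nonneg (r ^ 2 + h ^ 2)]
  have hA0 : 0 ≤ Real.arsinh (r / h) := by rw [← Real.arsinh_zero]; exact Real.arsinh_le_arsinh.2 (by positivity)
  have hA : Real.arsinh (r / h) ≤ r / h := arsinh_le_self' (by positivity)
  have hc : (0:ℝ) ≤ (d : ℝ) - 2 := by
    have : (2:ℝ) ≤ (d:ℝ) := by exact_mod_cast hd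
    linarith
  set A := Real.arsinh (r / h) with hAdef
  rw [div_le_iff₀ (by positivity)]
  -- A * (c h² + r²) ≤ (c + A) * (r s)
  have h1 : A * h ^ 2 ≤ r * s := by
    have : A * h ≤ r := by
      exact (le_div_iff₀ hh).1 hA
    have hhs : h ≤ s := by
      rw [hs]
      nlinarith [Real.sq_sqrt (show (0:ℝ) ≤ r ^ 2 + h ^ 2 by positivity), Real.sqrt_nonneg (r ^ 2 + h ^ 2)]
    nlinarith [mul_le_mul_of_nonneg_right this hh.le, mul_le_mul_of_nonneg_left hhs hr.le]
  have h2 : A * r ≤ A * s := mul_le_mul_of_nonneg_left hrs hA0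
  nlinarith [mul_le_mul_of_nonneg_left h1 hc, mul_le_mul_of_nonneg_left h2 hr.le]
end

section
/- Let L be the operator on smooth functions of one real variable defined by (Lf)(ρ) = −f′(ρ)/sinh(ρ), and for t > 0 let F_t(ρ) = exp(−ρ²/(2t)). For every n ∈ ℕ and every t > 0, there exist constants C > 0 and R > 0 such that for all ρ ≥ R: |Lⁿ(F_t)(ρ) · (t·sinh(ρ)/ρ)ⁿ · exp(ρ²/(2t)) − 1| ≤ C/ρ. Equivalently, Lⁿ(F_t)(ρ) = (ρ/(t·sinh ρ))ⁿ · (1 + O(1/ρ)) · exp(−ρ²/(2t)) as ρ → +∞. -/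
open Real Filter

/-!
By induction on `n`, `Lⁿ F_t = q_n(ρ, coth ρ) · F_t / sinhⁿ ρ` for ρ > 0, where `q_0 = 1` and
`q_{n+1} = (ρ/t) q_n - q_n' + n coth ρ · q_n`. Since `coth' = 1 - coth²`, the derivative of a
polynomial in `ρ` and `coth ρ` is again one, of no larger degree in `ρ`; so `q_n` has degree at most
`n` in `ρ`, and as `coth` is bounded at infinity the recursion gives `q_n / ρⁿ = t⁻ⁿ + O(1/ρ)`.
-/

open MvPolynomial Asymptotics Topology Set

theorem MvPolynomial.degreeOf_pderiv_le {σ R : Type*} [CommSemiring R] (i j : σ)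
    (p : MvPolynomial σ R) : degreeOf i (pderiv j p) ≤ degreeOf i p := by
  classical
  rw [degreeOf_le_iff]
  intro m hm
  rw [mem_support_iff, coeff_pderiv] at hm
  have hmem : m + Finsupp.single j 1 ∈ p.support := mem_support_iff.2 (left_ne_zero_of_mul hm)
  calc m i ≤ (m + Finsupp.single j 1 : σ →₀ ℕ) i := by simp
    _ ≤ degreeOf i p := monomial_le_degreeOf i hmem

theorem Asymptotics.isBigO_pow_pow_atTop_of_le {a k : ℕ} (h : a ≤ k) :
    (fun ρ : ℝ => ρ ^ a) =O[atTop] (fun ρ => ρ ^ k) := by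
  refine isBigO_iff.2 ⟨1, ?_⟩
  filter_upwards [eventually_ge_atTop 1] with ρ hρ
  rw [one_mul, Real.norm_of_nonneg (by positivity), Real.norm_of_nonneg (by positivity)]
  exact pow_le_pow_right₀ hρ h

theorem Asymptotics.isBigO_div_pow_succ_inv {g : ℝ → ℝ} {n : ℕ}
    (hg : g =O[atTop] (fun ρ => ρ ^ n)) : (fun ρ => g ρ / ρ ^ (n + 1)) =O[atTop] (fun ρ => ρ⁻¹) := by
  refine (hg.mul (isBigO_refl (fun ρ => (ρ ^ (n + 1))⁻¹) atTop)).congr' .rfl ?_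
  filter_upwards [eventually_ne_atTop 0] with ρ hρ
  field_simp
  ring

namespace Real

theorem hasDerivAt_cosh_div_sinh {ρ : ℝ} (hρ : ρ ≠ 0) :
    HasDerivAt (fun x => cosh x / sinh x) (1 - (cosh ρ / sinh ρ) ^ 2) ρ := by
  have hs : sinh ρ ≠ 0 := sinh_ne_zero.2 hρ
  refine ((hasDerivAt_cosh ρ).div (hasDerivAt_sinh ρ) hs).congr_deriv ?_
  rw [div_pow, one_sub_div (pow_ne_zero 2 hs)]
  ring

theorem cosh_div_sinh_antitoneOn : AntitoneOn (fun x => cosh x / sinh x) (Ioi 0) := by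
  intro a ha ρ hρ haρ
  rw [div_le_div_iff₀ (sinh_pos_iff.2 hρ) (sinh_pos_iff.2 ha)]
  have h : 0 ≤ sinh (ρ - a) := sinh_nonneg_iff.2 (sub_nonneg.2 haρ)
  rw [sinh_sub] at h
  linarith

theorem isBigO_cosh_div_sinh_one : (fun ρ => cosh ρ / sinh ρ) =O[atTop] (fun _ => (1 : ℝ)) := by
  refine isBigO_iff.2 ⟨cosh 1 / sinh 1, ?_⟩
  filter_upwards [eventually_ge_atTop 1] with ρ hρ
  have hs : 0 < sinh ρ := sinh_pos_iff.2 (one_pos.trans_le hρ)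
  rw [norm_one, mul_one, Real.norm_of_nonneg (by positivity)]
  exact cosh_div_sinh_antitoneOn (mem_Ioi.2 one_pos) (mem_Ioi.2 (one_pos.trans_le hρ)) hρ

end Real

namespace HyperbolicHeatKernel

/-- `X 0` stands for `ρ` and `X 1` for `coth ρ`. -/
noncomputable def evalCoth (p : MvPolynomial (Fin 2) ℝ) (ρ : ℝ) : ℝ :=
  eval ![ρ, cosh ρ / sinh ρ] p

/-- `d/dρ` on polynomials in `ρ` and `coth ρ`, as `coth' = 1 - coth²`. -/
noncomputable def cothDeriv : Derivation ℝ (MvPolynomial (Fin 2) ℝ) (MvPolynomial (Fin 2) ℝ) :=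
  pderiv 0 + (1 - X 1 ^ 2 : MvPolynomial (Fin 2) ℝ) • pderiv 1

theorem cothDeriv_apply (p : MvPolynomial (Fin 2) ℝ) :
    cothDeriv p = pderiv 0 p + (1 - X 1 ^ 2) * pderiv 1 p := rfl

theorem hasDerivAt_evalCoth (p : MvPolynomial (Fin 2) ℝ) {ρ : ℝ} (hρ : ρ ≠ 0) :
    HasDerivAt (fun x => evalCoth p x) (evalCoth (cothDeriv p) ρ) ρ := by
  induction p using MvPolynomial.induction_on with
  | C a => simpa [evalCoth] using hasDerivAt_const ρ a
  | add p q hp hq =>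
    simp only [evalCoth, map_add] at hp hq ⊢
    exact hp.fun_add hq
  | mul_X p i hp =>
    have hX : HasDerivAt (fun x => evalCoth (X i) x) (evalCoth (cothDeriv (X i)) ρ) ρ := by
      fin_cases i
      · simpa [evalCoth, cothDeriv] using hasDerivAt_id' ρ
      · simpa [evalCoth, cothDeriv] using hasDerivAt_cosh_div_sinh hρ
    simp only [evalCoth, Derivation.leibniz, map_add, map_mul, smul_eq_mul] at hp hX ⊢
    refine (hp.fun_mul hX).congr_deriv ?_
    ring

theorem degreeOf_cothDeriv_le (p : MvPolynomial (Fin 2) ℝ) :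
    degreeOf 0 (cothDeriv p) ≤ degreeOf 0 p := by
  have h : degreeOf 0 (1 - X 1 ^ 2 : MvPolynomial (Fin 2) ℝ) = 0 := by
    refine Nat.eq_zero_of_le_zero ((degreeOf_sub_le _ _ _).trans ?_)
    simp [degreeOf_one, degreeOf_X_pow_of_ne]
  rw [cothDeriv_apply]
  refine (degreeOf_add_le _ _ _).trans (max_le (degreeOf_pderiv_le _ _ _) ?_)
  exact (degreeOf_mul_le _ _ _).trans (by rw [h, zero_add]; exact degreeOf_pderiv_le _ _ _)

theorem isBigO_evalCoth_of_degreeOf_le {p : MvPolynomial (Fin 2) ℝ} {k : ℕ}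
    (hp : degreeOf 0 p ≤ k) : evalCoth p =O[atTop] (fun ρ => ρ ^ k) := by
  have hterm : ∀ s ∈ p.support, (fun ρ => coeff s p * (ρ ^ s 0 * (cosh ρ / sinh ρ) ^ s 1))
      =O[atTop] (fun ρ => ρ ^ k) := fun s hs => by
    simpa using ((isBigO_pow_pow_atTop_of_le (degreeOf_le_iff.1 hp s hs)).mul
      (isBigO_cosh_div_sinh_one.pow (s 1))).const_mul_left (coeff s p)
  refine (IsBigO.fun_sum hterm).congr_left fun ρ => ?_
  conv_rhs => rw [evalCoth, p.as_sum, map_sum]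
  simp [eval_monomial, Finsupp.prod_fintype, Fin.prod_univ_two]

noncomputable def sinhDerivOp (f : ℝ → ℝ) (ρ : ℝ) : ℝ := -deriv f ρ / sinh ρ

theorem sinhDerivOp_evalCoth_div_sinh_pow_mul_gaussian (t : ℝ) (n : ℕ)
    (p : MvPolynomial (Fin 2) ℝ) {ρ : ℝ} (hρ : ρ ≠ 0) :
    sinhDerivOp (fun x => evalCoth p x / sinh x ^ n * exp (-x ^ 2 / (2 * t))) ρ
      = evalCoth (C t⁻¹ * X 0 * p - cothDeriv p + C (n : ℝ) * X 1 * p) ρ / sinh ρ ^ (n + 1)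
          * exp (-ρ ^ 2 / (2 * t)) := by
  have hs : sinh ρ ≠ 0 := sinh_ne_zero.2 hρ
  have hgauss : HasDerivAt (fun x => exp (-x ^ 2 / (2 * t)))
      (exp (-ρ ^ 2 / (2 * t)) * (-(2 * ρ) / (2 * t))) ρ := by
    simpa using (((hasDerivAt_pow 2 ρ).neg).div_const (2 * t)).exp
  have hderiv := (((hasDerivAt_evalCoth p hρ).fun_div ((hasDerivAt_sinh ρ).fun_pow n)
    (pow_ne_zero n hs))).fun_mul hgauss
  rw [sinhDerivOp, hderiv.deriv]
  simp only [evalCoth, map_add, map_sub, map_mul, eval_C, eval_X, Matrix.cons_val_zero,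
    Matrix.cons_val_one]
  -- `(sinh ^ n)'` comes as `n * sinh ^ (n - 1) * cosh`, with truncated `n - 1`
  rcases n with _ | n <;> field_simp <;> push_cast <;> ring

noncomputable def iterPoly (t : ℝ) : ℕ → MvPolynomial (Fin 2) ℝ
  | 0 => 1
  | n + 1 => C t⁻¹ * X 0 * iterPoly t n - cothDeriv (iterPoly t n) + C (n : ℝ) * X 1 * iterPoly t n

theorem iterate_sinhDerivOp_gaussian (t : ℝ) (n : ℕ) {ρ : ℝ} (hρ : 0 < ρ) :
    sinhDerivOp^[n] (fun x => exp (-x ^ 2 / (2 * t))) ρ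
      = evalCoth (iterPoly t n) ρ / sinh ρ ^ n * exp (-ρ ^ 2 / (2 * t)) := by
  induction n generalizing ρ with
  | zero => simp [iterPoly, evalCoth]
  | succ n ih =>
    have hnear : sinhDerivOp^[n] (fun x => exp (-x ^ 2 / (2 * t)))
        =ᶠ[𝓝 ρ] fun x => evalCoth (iterPoly t n) x / sinh x ^ n * exp (-x ^ 2 / (2 * t)) :=
      eventually_of_mem (Ioi_mem_nhds hρ) fun x hx => ih hx
    rw [Function.iterate_succ_apply', sinhDerivOp, hnear.deriv_eq, ← sinhDerivOp,
      sinhDerivOp_evalCoth_div_sinh_pow_mul_gaussian t n _ hρ.ne', iterPoly]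

theorem degreeOf_iterPoly_le (t : ℝ) (n : ℕ) : degreeOf 0 (iterPoly t n) ≤ n := by
  induction n with
  | zero => simp [iterPoly, degreeOf_one]
  | succ n ih =>
    have hX0 : degreeOf 0 (C t⁻¹ * X 0 * iterPoly t n) ≤ n + 1 := by
      grw [degreeOf_mul_le, degreeOf_mul_le, degreeOf_C, degreeOf_X_self, ih]
      omega
    have hD : degreeOf 0 (cothDeriv (iterPoly t n)) ≤ n + 1 :=
      (degreeOf_cothDeriv_le _).trans (ih.trans n.le_succ)
    have hX1 : degreeOf 0 (C (n : ℝ) * X 1 * iterPoly t n) ≤ n + 1 := by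
      grw [degreeOf_mul_le, degreeOf_mul_le, degreeOf_C, degreeOf_X_of_ne (by decide), ih]
      omega
    exact (degreeOf_add_le _ _ _).trans
      (max_le ((degreeOf_sub_le _ _ _).trans (max_le hX0 hD)) hX1)

theorem isBigO_evalCoth_iterPoly_div_pow_sub (t : ℝ) (n : ℕ) :
    (fun ρ => evalCoth (iterPoly t n) ρ / ρ ^ n - t⁻¹ ^ n) =O[atTop] (fun ρ => ρ⁻¹) := by
  induction n with
  | zero => simpa [iterPoly, evalCoth] using isBigO_zero (fun ρ : ℝ => ρ⁻¹) atTop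
  | succ n ih =>
    have hq := isBigO_evalCoth_of_degreeOf_le (degreeOf_iterPoly_le t n)
    have hDq := isBigO_evalCoth_of_degreeOf_le
      ((degreeOf_cothDeriv_le (iterPoly t n)).trans (degreeOf_iterPoly_le t n))
    have hcoth_q : (fun ρ => n * (cosh ρ / sinh ρ) * evalCoth (iterPoly t n) ρ)
        =O[atTop] (fun ρ => ρ ^ n) := by
      simpa using (isBigO_cosh_div_sinh_one.const_mul_left (n : ℝ)).mul hq
    refine ((ih.const_mul_left t⁻¹).add
      (isBigO_div_pow_succ_inv (hDq.neg_left.add hcoth_q))).congr' ?_ .rfl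
    filter_upwards [eventually_ne_atTop 0] with ρ hρ
    simp only [iterPoly, evalCoth, map_add, map_sub, map_mul, eval_C, eval_X,
      Matrix.cons_val_zero, Matrix.cons_val_one]
    field_simp
    ring

end HyperbolicHeatKernel

open HyperbolicHeatKernel

/-- For `L f = -f'/sinh` and `F_t(ρ) = exp(-ρ²/(2t))`:
`Lⁿ F_t (ρ) = (ρ/(t sinh ρ))ⁿ (1 + O(1/ρ)) exp(-ρ²/(2t))` as `ρ → ∞`. -/
theorem iterated_sinh_deriv_gaussian_asymptotics (n : ℕ) (t : ℝ) (ht : 0 < t) :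
    ∃ C > (0 : ℝ), ∃ R > (0 : ℝ), ∀ ρ ≥ R,
      |(fun f : ℝ → ℝ => fun ρ : ℝ => -(deriv f ρ) / Real.sinh ρ)^[n]
            (fun ρ : ℝ => Real.exp (-ρ ^ 2 / (2 * t))) ρ
          * (t * Real.sinh ρ / ρ) ^ n * Real.exp (ρ ^ 2 / (2 * t)) - 1| ≤ C / ρ := by
  obtain ⟨C, hC, hbound⟩ :=
    ((isBigO_evalCoth_iterPoly_div_pow_sub t n).const_mul_left (t ^ n)).exists_pos
  obtain ⟨R, hR⟩ := eventually_atTop.1 hbound.bound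
  refine ⟨C, hC, max R 1, by positivity, fun ρ hρ => ?_⟩
  have hρ0 : 0 < ρ := one_pos.trans_le ((le_max_right R 1).trans hρ)
  have hρR := hR ρ ((le_max_left R 1).trans hρ)
  rw [Real.norm_eq_abs, norm_inv, Real.norm_of_nonneg hρ0.le, ← div_eq_mul_inv] at hρR
  change |sinhDerivOp^[n] _ ρ * _ * _ - 1| ≤ _
  rw [iterate_sinhDerivOp_gaussian t n hρ0]
  convert hρR using 2
  have ht0 : t ≠ 0 := ht.ne'
  have hs : sinh ρ ≠ 0 := (sinh_pos_iff.2 hρ0).ne'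
  rw [neg_div, exp_neg, div_pow, inv_pow]
  field_simp
  ring
end

section
/- Let L be the operator on smooth functions of one real variable defined by (Lf)(ρ) = −f′(ρ)/sinh(ρ), and for t > 0 let F_t(ρ) = exp(−ρ²/(2t)). For every n ∈ ℕ and every t > 0, the ratio (t·sinh(ρ) · Lⁿ⁺¹(F_t)(ρ)) / (ρ · Lⁿ(F_t)(ρ)) tends to 1 as ρ → +∞. -/
/-!
On `(0, ∞)` one has `Lⁿ F_t = p_n F_t / sinhⁿ`, where `p_0 = 1` and
`p_{n+1} = (ρ / t + n coth ρ) p_n - p_n'`; hence the ratio is `t p_{n+1} / (ρ p_n)`.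
All derivatives of `coth` are bounded at infinity (each is a polynomial in `coth`), so the
recursion keeps `p_n` smooth on `(0, ∞)` with every derivative `O(ρⁿ)`. In particular
`n coth p_n - p_n' = o(ρⁿ⁺¹)`, and the recursion gives `p_n / ρⁿ → t⁻ⁿ`, whence the ratio
tends to `t · t⁻ⁿ⁻¹ / t⁻ⁿ = 1`.
-/

open Real Filter Set Asymptotics
open scoped ContDiff Topology

noncomputable def Real.coth (x : ℝ) : ℝ := cosh x / sinh x

lemma Real.coth_eq (x : ℝ) : coth x = (1 + exp (-(2 * x))) / (1 - exp (-(2 * x))) := by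
  have hinv : exp (-x) * exp x = 1 := by rw [← exp_add]; simp
  have hsq : exp (-(2 * x)) = exp (-x) * exp (-x) := by rw [← exp_add]; ring_nf
  rw [Real.coth, cosh_eq, sinh_eq, div_div_div_cancel_right₀ two_ne_zero,
    ← mul_div_mul_left _ _ (exp_ne_zero (-x)), hsq]
  congr 1 <;> linear_combination hinv

lemma Real.tendsto_coth_atTop : Tendsto coth atTop (𝓝 1) := by
  have h : Tendsto (fun x : ℝ => exp (-(2 * x))) atTop (𝓝 0) :=
    tendsto_exp_comp_nhds_zero.2 (tendsto_neg_atTop_atBot.comp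
      (tendsto_id.const_mul_atTop two_pos))
  have hlim := ((tendsto_const_nhds (x := (1 : ℝ))).add h).div
    ((tendsto_const_nhds (x := (1 : ℝ))).sub h) (by norm_num)
  rw [show coth = _ from funext coth_eq]
  convert hlim using 2 <;> norm_num

lemma Real.hasDerivAt_coth {x : ℝ} (hx : x ≠ 0) : HasDerivAt coth (1 - coth x ^ 2) x := by
  have hs : sinh x ≠ 0 := sinh_ne_zero.2 hx
  refine ((hasDerivAt_cosh x).div (hasDerivAt_sinh x) hs).congr_deriv ?_
  rw [Real.coth]
  field_simp

lemma Real.hasDerivAt_sinh_pow (n : ℕ) {x : ℝ} (hx : x ≠ 0) :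
    HasDerivAt (fun y => sinh y ^ n) (n * coth x * sinh x ^ n) x := by
  refine ((hasDerivAt_sinh x).pow n).congr_deriv ?_
  have hs : sinh x ≠ 0 := sinh_ne_zero.2 hx
  rcases n with _ | n
  · simp
  · rw [Nat.add_sub_cancel, Real.coth]
    field_simp
    ring

lemma Real.contDiffAt_coth {x : ℝ} (hx : x ≠ 0) : ContDiffAt ℝ ∞ coth x :=
  contDiff_cosh.contDiffAt.div contDiff_sinh.contDiffAt (sinh_ne_zero.2 hx)

lemma Real.exists_iteratedDeriv_coth_eqOn (j : ℕ) :
    ∃ P : Polynomial ℝ, EqOn (iteratedDeriv j coth) (fun x => P.eval (coth x)) {0}ᶜ := by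
  induction j with
  | zero => exact ⟨.X, fun x _ => by simp⟩
  | succ j ih =>
    obtain ⟨P, hP⟩ := ih
    refine ⟨P.derivative * (1 - .X ^ 2), fun x hx => ?_⟩
    rw [iteratedDeriv_succ, (hP.eventuallyEq_of_mem (isOpen_compl_singleton.mem_nhds hx)).deriv_eq]
    exact ((P.hasDerivAt (coth x)).comp x (hasDerivAt_coth hx)).deriv.trans (by simp)

def SmoothPolyGrowth (k : ℕ) (f : ℝ → ℝ) : Prop :=
  ContDiffOn ℝ ∞ f (Ioi 0) ∧ ∀ j, iteratedDeriv j f =O[atTop] fun x => x ^ k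

namespace SmoothPolyGrowth

variable {k m : ℕ} {f g : ℝ → ℝ}

lemma contDiffAt (hf : SmoothPolyGrowth k f) (j : ℕ) {x : ℝ} (hx : 0 < x) :
    ContDiffAt ℝ j f x :=
  (hf.1.contDiffAt (Ioi_mem_nhds hx)).of_le (mod_cast le_top)

lemma mono (hf : SmoothPolyGrowth k f) (hkm : k ≤ m) : SmoothPolyGrowth m f := by
  refine ⟨hf.1, fun j => (hf.2 j).trans ?_⟩
  rcases hkm.eq_or_lt with rfl | hlt
  · exact isBigO_refl _ _
  · exact (isLittleO_pow_pow_atTop_of_lt hlt).isBigO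

lemma deriv (hf : SmoothPolyGrowth k f) : SmoothPolyGrowth k (deriv f) :=
  ⟨hf.1.deriv_of_isOpen isOpen_Ioi le_rfl, fun j => iteratedDeriv_succ' (f := f) ▸ hf.2 (j + 1)⟩

lemma add (hf : SmoothPolyGrowth k f) (hg : SmoothPolyGrowth k g) :
    SmoothPolyGrowth k (f + g) := by
  refine ⟨hf.1.add hg.1, fun j => ((hf.2 j).add (hg.2 j)).congr' ?_ EventuallyEq.rfl⟩
  filter_upwards [eventually_gt_atTop 0] with x hx
  exact (iteratedDeriv_add (hf.contDiffAt j hx) (hg.contDiffAt j hx)).symm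

lemma sub (hf : SmoothPolyGrowth k f) (hg : SmoothPolyGrowth k g) :
    SmoothPolyGrowth k (f - g) := by
  refine ⟨hf.1.sub hg.1, fun j => ((hf.2 j).sub (hg.2 j)).congr' ?_ EventuallyEq.rfl⟩
  filter_upwards [eventually_gt_atTop 0] with x hx
  exact (iteratedDeriv_sub (hf.contDiffAt j hx) (hg.contDiffAt j hx)).symm

lemma mul (hf : SmoothPolyGrowth k f) (hg : SmoothPolyGrowth m g) :
    SmoothPolyGrowth (k + m) (f * g) := by
  refine ⟨hf.1.mul hg.1, fun j => ?_⟩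
  have hsum : (fun x => ∑ i ∈ Finset.range (j + 1),
      (j.choose i : ℝ) * iteratedDeriv i f x * iteratedDeriv (j - i) g x)
        =O[atTop] fun x => x ^ (k + m) := by
    refine IsBigO.fun_sum fun i _ => ?_
    simpa only [pow_add, one_mul] using
      ((isBigO_const_one ℝ (j.choose i : ℝ) atTop).mul (hf.2 i)).mul (hg.2 (j - i))
  refine hsum.congr' ?_ EventuallyEq.rfl
  filter_upwards [eventually_gt_atTop 0] with x hx
  exact (iteratedDeriv_mul (hf.contDiffAt j hx) (hg.contDiffAt j hx)).symm

end SmoothPolyGrowth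

lemma smoothPolyGrowth_const (c : ℝ) : SmoothPolyGrowth 0 fun _ => c := by
  refine ⟨contDiffOn_const, fun j => ?_⟩
  rw [show iteratedDeriv j (fun _ : ℝ => c) = fun _ => if j = 0 then c else 0 from
    funext fun _ => iteratedDeriv_const]
  split_ifs
  · exact isBigO_const_const c one_ne_zero atTop
  · exact isBigO_zero _ _

lemma smoothPolyGrowth_id : SmoothPolyGrowth 1 fun x => x := by
  refine ⟨contDiffOn_id, fun j => ?_⟩
  rw [show iteratedDeriv j (fun x : ℝ => x) = _ from funext fun _ => iteratedDeriv_fun_id]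
  simp only [pow_one]
  split_ifs
  · exact isBigO_refl _ _
  · exact (isLittleO_const_id_atTop 1).isBigO
  · exact isBigO_zero _ _

lemma smoothPolyGrowth_coth : SmoothPolyGrowth 0 coth := by
  refine ⟨fun x hx => (contDiffAt_coth (ne_of_gt hx)).contDiffWithinAt, fun j => ?_⟩
  obtain ⟨P, hP⟩ := exists_iteratedDeriv_coth_eqOn j
  have hbdd : (fun x => P.eval (coth x)) =O[atTop] fun _ => (1 : ℝ) :=
    ((P.continuous.tendsto 1).comp tendsto_coth_atTop).isBigO_one ℝ
  refine hbdd.congr' ?_ (by simp)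
  filter_upwards [eventually_ne_atTop 0] with x hx using (hP hx).symm

noncomputable def sinhDeriv (f : ℝ → ℝ) (ρ : ℝ) : ℝ := -(deriv f ρ) / sinh ρ

noncomputable def gaussian (t ρ : ℝ) : ℝ := exp (-ρ ^ 2 / (2 * t))

lemma hasDerivAt_gaussian (t x : ℝ) :
    HasDerivAt (gaussian t) (-(t⁻¹ * x) * gaussian t x) x := by
  refine (((hasDerivAt_pow 2 x).neg.div_const (2 * t)).exp).congr_deriv ?_
  simp only [gaussian, Pi.neg_apply]
  push_cast
  ring

noncomputable def gaussianFactor (t : ℝ) : ℕ → ℝ → ℝ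
  | 0 => fun _ => 1
  | n + 1 => fun ρ =>
      (t⁻¹ * ρ + n * coth ρ) * gaussianFactor t n ρ - deriv (gaussianFactor t n) ρ

lemma smoothPolyGrowth_gaussianFactor (t : ℝ) (n : ℕ) :
    SmoothPolyGrowth n (gaussianFactor t n) := by
  induction n with
  | zero => exact smoothPolyGrowth_const 1
  | succ n ih =>
    have hlin : SmoothPolyGrowth 1 fun ρ => t⁻¹ * ρ + n * coth ρ :=
      ((smoothPolyGrowth_const t⁻¹).mul smoothPolyGrowth_id).add
        (((smoothPolyGrowth_const (n : ℝ)).mul smoothPolyGrowth_coth).mono zero_le_one)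
    exact ((hlin.mul ih).mono (by omega)).sub (ih.deriv.mono n.le_succ)

lemma tendsto_gaussianFactor_div_pow (t : ℝ) (n : ℕ) :
    Tendsto (fun ρ => gaussianFactor t n ρ / ρ ^ n) atTop (𝓝 (t⁻¹ ^ n)) := by
  induction n with
  | zero => simp [gaussianFactor]
  | succ n ih =>
    have hp := smoothPolyGrowth_gaussianFactor t n
    have hO : (fun ρ => n * coth ρ * gaussianFactor t n ρ - deriv (gaussianFactor t n) ρ)
        =O[atTop] fun ρ => ρ ^ n :=
      (((((smoothPolyGrowth_const (n : ℝ)).mul smoothPolyGrowth_coth).mul hp).mono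
        (by omega)).sub hp.deriv).2 0
    have hrem : Tendsto (fun ρ => (n * coth ρ * gaussianFactor t n ρ
        - deriv (gaussianFactor t n) ρ) / ρ ^ (n + 1)) atTop (𝓝 0) :=
      (hO.trans_isLittleO (isLittleO_pow_pow_atTop_of_lt n.lt_succ_self)).tendsto_div_nhds_zero
    have hlim := (ih.const_mul t⁻¹).add hrem
    rw [add_zero, ← pow_succ'] at hlim
    refine hlim.congr' ?_
    filter_upwards [eventually_gt_atTop 0] with ρ hρ
    simp only [gaussianFactor]
    field_simp
    ring

lemma iterate_sinhDeriv_gaussian (t : ℝ) (n : ℕ) :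
    EqOn (sinhDeriv^[n] (gaussian t))
      (fun ρ => gaussianFactor t n ρ * gaussian t ρ / sinh ρ ^ n) (Ioi 0) := by
  induction n with
  | zero => intro ρ _; simp [gaussianFactor]
  | succ n ih =>
    intro x hx
    have hs : sinh x ≠ 0 := (sinh_pos_iff.2 hx).ne'
    have hp : HasDerivAt (gaussianFactor t n) (deriv (gaussianFactor t n) x) x :=
      (((smoothPolyGrowth_gaussianFactor t n).contDiffAt 1 hx).differentiableAt
        one_ne_zero).hasDerivAt
    have hderiv : HasDerivAt (fun ρ => gaussianFactor t n ρ * gaussian t ρ / sinh ρ ^ n) _ x :=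
      (hp.mul (hasDerivAt_gaussian t x)).div (hasDerivAt_sinh_pow n hx.ne') (pow_ne_zero n hs)
    rw [Function.iterate_succ_apply', sinhDeriv,
      (ih.eventuallyEq_of_mem (Ioi_mem_nhds hx)).deriv_eq, hderiv.deriv]
    simp only [gaussianFactor, Pi.mul_apply]
    field_simp
    ring

/-- For `L f = -f'/sinh` and `F_t(ρ) = exp(-ρ²/(2t))`:
`(t sinh ρ · Lⁿ⁺¹ F_t (ρ)) / (ρ · Lⁿ F_t (ρ)) → 1` as `ρ → +∞`. -/
theorem iterated_sinh_deriv_gaussian_ratio (n : ℕ) (t : ℝ) (ht : 0 < t) :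
    Tendsto (fun ρ : ℝ =>
        (t * Real.sinh ρ *
            (fun f : ℝ → ℝ => fun ρ : ℝ => -(deriv f ρ) / Real.sinh ρ)^[n + 1]
              (fun ρ : ℝ => Real.exp (-ρ ^ 2 / (2 * t))) ρ) /
          (ρ * (fun f : ℝ → ℝ => fun ρ : ℝ => -(deriv f ρ) / Real.sinh ρ)^[n]
              (fun ρ : ℝ => Real.exp (-ρ ^ 2 / (2 * t))) ρ))
      atTop (nhds 1) := by
  change Tendsto (fun ρ => t * sinh ρ * sinhDeriv^[n + 1] (gaussian t) ρ /
    (ρ * sinhDeriv^[n] (gaussian t) ρ)) atTop (𝓝 1)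
  have hc : t⁻¹ ^ n ≠ 0 := pow_ne_zero n (inv_ne_zero ht.ne')
  have h₀ := tendsto_gaussianFactor_div_pow t n
  have hlim := ((tendsto_gaussianFactor_div_pow t (n + 1)).const_mul t).div h₀ hc
  rw [pow_succ', ← mul_assoc, mul_inv_cancel₀ ht.ne', one_mul, div_self hc] at hlim
  refine hlim.congr' ?_
  filter_upwards [eventually_gt_atTop 0, h₀.eventually_ne hc] with ρ hρ hp
  have hs : sinh ρ ≠ 0 := (sinh_pos_iff.2 hρ).ne'
  have hg : gaussian t ρ ≠ 0 := exp_ne_zero _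
  rw [Pi.div_apply, iterate_sinhDeriv_gaussian t (n + 1) hρ, iterate_sinhDeriv_gaussian t n hρ]
  have hp' : gaussianFactor t n ρ ≠ 0 := (div_ne_zero_iff.1 hp).1
  field_simp
  ring
end

section
/- Let k > 1, α₀ > 0 and ν ∈ ℝ, and set ν′ = ν − (k−1)/(2·α₀·tanh α₀). If ν′ > 0, then for every x ≥ α₀ one has −ν′·tanh(x − α₀) > −ν·tanh(x) + (k−1)/(2x); equivalently, ν·tanh(x) − (k−1)/(2x) > ν′·tanh(x − α₀). -/
/-!
Write `ν = ν′ + c` with `c = (k−1)/(2α₀ tanh α₀)`. Then `ν′ tanh x > ν′ tanh (x − α₀)` because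
`tanh` is strictly increasing, and `c tanh x ≥ c tanh α₀ = (k−1)/(2α₀) ≥ (k−1)/(2x)` because
`tanh` increases while `1/x` decreases on `[α₀, ∞)`.
-/

open Real

theorem Real.tanh_strictMono : StrictMono tanh := fun a b hab ↦
  lt_of_not_ge fun h ↦ hab.not_ge <| by
    simpa only [artanh_tanh] using artanh_le_artanh (neg_one_lt_tanh b) (tanh_lt_one a) h

theorem Real.tanh_pos {x : ℝ} (hx : 0 < x) : 0 < tanh x := by
  simpa only [tanh_zero] using tanh_strictMono hx

theorem div_le_div_mul_tanh_of_le {m a x : ℝ} (hm : 0 ≤ m) (ha : 0 < a) (hax : a ≤ x) :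
    m / x ≤ m / (a * tanh a) * tanh x :=
  calc m / x ≤ m / a := div_le_div_of_nonneg_left hm ha hax
    _ = m / (a * tanh a) * tanh a := by field_simp [(tanh_pos ha).ne']
    _ ≤ m / (a * tanh a) * tanh x :=
      mul_le_mul_of_nonneg_left (tanh_strictMono.monotone hax)
        (div_nonneg hm (mul_pos ha (tanh_pos ha)).le)

/-- Drift comparison: with `ν′ = ν − (k−1)/(2α₀ tanh α₀) > 0`, for every `x ≥ α₀` one has
`−ν′ tanh(x − α₀) > −ν tanh x + (k−1)/(2x)`. -/
theorem drift_comparison (k α₀ ν ν' : ℝ) (hk : 1 < k) (hα : 0 < α₀)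
    (hν' : ν' = ν - (k - 1) / (2 * α₀ * Real.tanh α₀)) (hν'pos : 0 < ν') :
    ∀ x ≥ α₀,
      -ν' * Real.tanh (x - α₀) > -ν * Real.tanh x + (k - 1) / (2 * x) ∧
      ν * Real.tanh x - (k - 1) / (2 * x) > ν' * Real.tanh (x - α₀) := by
  intro x hx
  have hsingular : (k - 1) / (2 * x) ≤ (k - 1) / (2 * α₀ * tanh α₀) * tanh x := by
    simpa only [div_div, mul_assoc] using
      div_le_div_mul_tanh_of_le (m := (k - 1) / 2) (by linarith) hα hx
  have hshift : ν' * tanh (x - α₀) < ν' * tanh x :=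
    mul_lt_mul_of_pos_left (tanh_strictMono (by linarith)) hν'pos
  have hsplit : ν * tanh x = ν' * tanh x + (k - 1) / (2 * α₀ * tanh α₀) * tanh x := by
    rw [hν']; ring
  constructor <;> linarith
end
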